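/- Let ℓ ≥ 3 be an integer. (i) For every (η, a) ∈ U^(1) there exists an integer k with 1 ≤ k ≤ ℓ−1 such that the exponent vector (η − k, a − (2k+1)), where (η − k)(i) = η(i) − k, belongs to U^(0). (ii) For distinct integers i, j with 1 ≤ i, j ≤ ℓ−1, there is no (μ, c) ∈ U^(0) with η_i = μ + η_j (pointwise) and 2i+1 = c + 2j+1. (Thus T^{η_1}, T^{η_2}, …, T^{η_{ℓ−1}} is a minimal system of generators of the canonical ideal of the Ehrhart ring consisting of monomials.) -/

import Mathlib

/-- `(μ, d)` belongs to `U^(n)` for the cycle of length `2ℓ+1`. -/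
def inU (ℓ : ℕ) (n : ℤ) (μ : Fin (2 * ℓ + 1) → ℤ) (d : ℤ) : Prop :=
  (∀ i, n ≤ μ i) ∧
  (∀ i : Fin (2 * ℓ + 1), μ i + μ (i + 1) ≤ d - n) ∧
  (∑ i, μ i ≤ (ℓ : ℤ) * d - n)

/-!
(i) Starting from any vertex `x` of the odd cycle, the remaining `2ℓ` vertices split into `ℓ`
consecutive pairs, so `∑ η ≤ η x + ℓ (a - 1)`. Hence `k = max 1 (∑ η - ℓ (a - 1))` is at most every
`η x`, and it is at most `ℓ - 1` because `∑ η ≤ ℓ a - 1`; these are exactly the conditions for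
`(η - k, a - (2k+1))` to lie in `U^(0)`.

(ii) `η_i - η_j` is the constant vector `i - j` of degree `2 (i - j)`, which lies in `U^(0)` only if
`0 ≤ i - j` and `(2ℓ+1)(i - j) ≤ 2ℓ (i - j)`, i.e. `i = j`.
-/

open Finset

section CycleSum

variable {M : Type*} [AddCommMonoid M] [PartialOrder M] [IsOrderedAddMonoid M]

theorem sum_range_two_mul_le_nsmul (g : ℕ → M) (b : M) (h : ∀ t, g t + g (t + 1) ≤ b) (n : ℕ) :
    ∑ t ∈ range (2 * n), g t ≤ n • b := by
  induction n with
  | zero => simp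
  | succ n ih =>
    rw [show 2 * (n + 1) = 2 * n + 1 + 1 by ring, sum_range_succ, sum_range_succ, add_assoc,
      succ_nsmul]
    exact add_le_add ih (h _)

open Fin.NatCast in
theorem Fin.sum_le_add_nsmul_of_add_succ_le {ℓ : ℕ} (f : Fin (2 * ℓ + 1) → M) (b : M)
    (h : ∀ i, f i + f (i + 1) ≤ b) (x : Fin (2 * ℓ + 1)) :
    ∑ i, f i ≤ f x + ℓ • b := by
  set g : ℕ → M := fun t => f (x + (t : Fin (2 * ℓ + 1)))
  have hrot : ∑ i, f i = ∑ t ∈ range (2 * ℓ + 1), g t := by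
    rw [← Fin.sum_univ_eq_sum_range g]
    simp only [g, Fin.cast_val_eq_self]
    exact (Fintype.sum_equiv (Equiv.addLeft x) _ f fun _ => rfl).symm
  have hpairs : ∀ t, g (t + 1) + g (t + 1 + 1) ≤ b := fun t => by
    simpa only [g, Nat.cast_succ (t + 1), ← add_assoc] using h (x + ((t + 1 : ℕ) : Fin _))
  rw [hrot, sum_range_succ', add_comm]
  simpa [g] using add_le_add (le_refl (f x)) (sum_range_two_mul_le_nsmul _ b hpairs ℓ)

end CycleSum

section ExponentVectors

variable {ℓ : ℕ}

theorem inU_sub_const_iff (n k d : ℤ) (μ : Fin (2 * ℓ + 1) → ℤ) :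
    inU ℓ n (fun i => μ i - k) (d - 2 * k) ↔
      (∀ i, n + k ≤ μ i) ∧ (∀ i, μ i + μ (i + 1) ≤ d - n) ∧ ∑ i, μ i ≤ ℓ * d - n + k := by
  simp only [inU, sum_sub_distrib, sum_const, card_univ, Fintype.card_fin, nsmul_eq_mul]
  push_cast
  refine and_congr (forall_congr' fun i => ?_) (and_congr (forall_congr' fun i => ?_) ?_) <;>
    constructor <;> intro h <;> linarith

theorem inU_zero_const_iff (m : ℤ) : inU ℓ 0 (fun _ => m) (2 * m) ↔ m = 0 := by
  simp only [inU, sum_const, card_univ, Fintype.card_fin, nsmul_eq_mul]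
  push_cast
  constructor
  · rintro ⟨hpos, -, hsum⟩
    have := hpos 0
    nlinarith
  · rintro rfl
    simp

theorem exists_sub_mem_inU_zero_of_inU_one (hℓ : 2 ≤ ℓ) {η : Fin (2 * ℓ + 1) → ℤ} {a : ℤ}
    (h : inU ℓ 1 η a) :
    ∃ k : ℤ, 1 ≤ k ∧ k ≤ ℓ - 1 ∧ inU ℓ 0 (fun i => η i - k) (a - (2 * k + 1)) := by
  obtain ⟨hpos, hpair, hsum⟩ := h
  have hbound : ∀ x, ∑ i, η i - ℓ * (a - 1) ≤ η x := fun x => by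
    have := Fin.sum_le_add_nsmul_of_add_succ_le η (a - 1) hpair x
    rw [nsmul_eq_mul] at this
    linarith
  have hℓ' : (2 : ℤ) ≤ ℓ := by exact_mod_cast hℓ
  refine ⟨max 1 (∑ i, η i - ℓ * (a - 1)), le_max_left _ _, max_le (by linarith) (by linarith), ?_⟩
  rw [show a - (2 * max 1 (∑ i, η i - ℓ * (a - 1)) + 1)
      = (a - 1) - 2 * max 1 (∑ i, η i - ℓ * (a - 1)) by ring, inU_sub_const_iff]
  refine ⟨fun i => by simpa using max_le (hpos i) (hbound i), fun i => by simpa using hpair i, ?_⟩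
  linarith [le_max_right 1 (∑ i, η i - ℓ * (a - 1))]

end ExponentVectors

theorem stmt_12 (ℓ : ℕ) (hℓ : 3 ≤ ℓ) :
    (∀ (η : Fin (2 * ℓ + 1) → ℤ) (a : ℤ), inU ℓ 1 η a →
      ∃ k : ℤ, 1 ≤ k ∧ k ≤ (ℓ : ℤ) - 1 ∧
        inU ℓ 0 (fun i => η i - k) (a - (2 * k + 1))) ∧
    (∀ i j : ℤ, 1 ≤ i → i ≤ (ℓ : ℤ) - 1 → 1 ≤ j → j ≤ (ℓ : ℤ) - 1 → i ≠ j →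
      ¬ ∃ (μ : Fin (2 * ℓ + 1) → ℤ) (c : ℤ), inU ℓ 0 μ c ∧
        (∀ x : Fin (2 * ℓ + 1), i = μ x + j) ∧ 2 * i + 1 = c + (2 * j + 1)) := by
  refine ⟨fun η a h => exists_sub_mem_inU_zero_of_inU_one (by omega) h, ?_⟩
  rintro i j - - - - hij ⟨μ, c, hμc, hμ, hc⟩
  have hμ' : μ = fun _ => i - j := funext fun x => by linarith [hμ x]
  have hc' : c = 2 * (i - j) := by linarith
  subst hμ' hc'
  exact hij (sub_eq_zero.mp ((inU_zero_const_iff (i - j)).mp hμc))
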